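/- Let S be a numerical semigroup. If 0 ≤ k₁ < k₂ ≤ L − 1, then n_{k₁} ≤ n_{k₂}. -/

import Mathlib

/-- A numerical semigroup: an additive submonoid of `ℕ` (containing `0`, closed under
addition) whose complement in `ℕ` is finite. -/
structure NumericalSemigroup where
  carrier : Set ℕ
  zero_mem : 0 ∈ carrier
  add_mem : ∀ ⦃a b : ℕ⦄, a ∈ carrier → b ∈ carrier → a + b ∈ carrier
  cofinite : (carrierᶜ : Set ℕ).Finite

namespace NumericalSemigroup

/-- The multiplicity `m(S)`: the smallest positive element of `S`. -/
noncomputable def mult (S : NumericalSemigroup) : ℕ :=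
  sInf {s : ℕ | s ∈ S.carrier ∧ 0 < s}

/-- The embedding dimension `ν(S)`: the cardinality of the (unique) minimal system of
generators of `S`, i.e. the least cardinality of a generating set. -/
noncomputable def embdim (S : NumericalSemigroup) : ℕ :=
  sInf {n : ℕ | ∃ G : Finset ℕ,
    S.carrier = (AddSubmonoid.closure (G : Set ℕ) : Set ℕ) ∧ G.card = n}

/-- The Frobenius number `f(S)`: the largest integer not belonging to `S`. -/
noncomputable def frob (S : NumericalSemigroup) : ℤ :=
  sSup {x : ℤ | ∀ s ∈ S.carrier, (s : ℤ) ≠ x}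

/-- `n(S)`: the number of elements of `S` smaller than the Frobenius number. -/
noncomputable def small (S : NumericalSemigroup) : ℕ :=
  {s : ℕ | s ∈ S.carrier ∧ (s : ℤ) < S.frob}.ncard

/-- The type `t(S)`: the number of pseudo-Frobenius numbers of `S`, i.e. integers
`x ∉ S` such that `x + s ∈ S` for every nonzero `s ∈ S`. -/
noncomputable def typ (S : NumericalSemigroup) : ℕ :=
  {x : ℤ | (∀ s ∈ S.carrier, (s : ℤ) ≠ x) ∧
    ∀ s ∈ S.carrier, 0 < s → ∃ u ∈ S.carrier, (u : ℤ) = x + s}.ncard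

/-- The `k`-th interval `I_k = [k·m, (k+1)·m - 1]` (for a given `m`). -/
def interval (m k : ℕ) : Set ℕ := Set.Ico (k * m) ((k + 1) * m)

/-- `n_k`: the number of elements of `S ∩ I_k` smaller than the Frobenius number. -/
noncomputable def nk (S : NumericalSemigroup) (k : ℕ) : ℕ :=
  {s : ℕ | s ∈ S.carrier ∩ interval S.mult k ∧ (s : ℤ) < S.frob}.ncard

/-- `L = ⌊f(S)/m(S)⌋`. -/
noncomputable def Lindex (S : NumericalSemigroup) : ℤ := S.frob / (S.mult : ℤ)

/-- `ρ = f(S) + 1 - L·m(S)`. -/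
noncomputable def rho (S : NumericalSemigroup) : ℤ :=
  S.frob + 1 - S.Lindex * (S.mult : ℤ)

/-- The Apéry set `Ap(S) = {w ∈ S : w - m(S) ∉ S}`. -/
def apery (S : NumericalSemigroup) : Set ℕ :=
  {w : ℕ | w ∈ S.carrier ∧ ∀ u ∈ S.carrier, u + S.mult ≠ w}

theorem apery_finite (S : NumericalSemigroup) : S.apery.Finite := by
  apply Set.Finite.subset ((Set.finite_Iio S.mult).union (S.cofinite.image (· + S.mult)))
  intro x hx
  by_cases h : x < S.mult
  · exact Or.inl h
  · refine Or.inr ⟨x - S.mult, fun hmem => hx.2 _ hmem (by omega), ?_⟩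
    show x - S.mult + S.mult = x
    omega

/-- `w j`: the `(j+1)`-st smallest element of the Apéry set, so that
`Ap(S) = {w 0 < w 1 < ... < w (m-1)}` with `w 0 = 0`. -/
noncomputable def w (S : NumericalSemigroup) (j : ℕ) : ℕ :=
  (S.apery_finite.toFinset.sort (· ≤ ·)).getD j 0

/-- `ε_j`: the number of `k ∈ {0, ..., L-1}` such that `|I_k ∩ S| = j`. -/
noncomputable def eps (S : NumericalSemigroup) (j : ℕ) : ℕ :=
  {k : ℕ | (k : ℤ) < S.Lindex ∧ (S.carrier ∩ interval S.mult k).ncard = j}.ncard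

/-- `η_j`: the number of `k ∈ ℕ` such that `|I_k ∩ S| = j`. -/
noncomputable def eta (S : NumericalSemigroup) (j : ℕ) : ℕ :=
  {k : ℕ | (S.carrier ∩ interval S.mult k).ncard = j}.ncard

/-! Since `S + m ⊆ S`, translation by `(k₂ - k₁)·m` embeds `S ∩ I_{k₁}` into `S ∩ I_{k₂}`; for
`k ≤ L - 1` the whole interval `I_k` lies below `f(S)`, so `n_k = |S ∩ I_k|`. -/

theorem _root_.Set.ncard_inter_Ico_le_of_add_mem {A : Set ℕ} {t : ℕ} (hA : ∀ a ∈ A, a + t ∈ A)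
    (a b : ℕ) : (A ∩ Set.Ico a b).ncard ≤ (A ∩ Set.Ico (a + t) (b + t)).ncard :=
  Set.ncard_le_ncard_of_injOn (· + t)
    (fun x ⟨hx, hax, hxb⟩ => ⟨hA x hx, by omega, by omega⟩)
    (add_left_injective t).injOn ((Set.finite_Ico _ _).inter_of_right A)

theorem exists_pos_mem (S : NumericalSemigroup) : ∃ s ∈ S.carrier, 0 < s := by
  obtain ⟨b, hb⟩ := S.cofinite.bddAbove
  exact ⟨b + 1, by_contra fun h => absurd (hb h) (by omega), b.succ_pos⟩

theorem mult_mem (S : NumericalSemigroup) : S.mult ∈ S.carrier :=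
  (Nat.sInf_mem (s := {s | s ∈ S.carrier ∧ 0 < s}) S.exists_pos_mem).1

theorem mult_pos (S : NumericalSemigroup) : 0 < S.mult :=
  (Nat.sInf_mem (s := {s | s ∈ S.carrier ∧ 0 < s}) S.exists_pos_mem).2

theorem mul_mult_mem (S : NumericalSemigroup) (d : ℕ) : d * S.mult ∈ S.carrier := by
  induction d with
  | zero => simpa using S.zero_mem
  | succ d ih => simpa [Nat.succ_mul] using S.add_mem ih S.mult_mem

theorem ncard_inter_interval_mono (S : NumericalSemigroup) {k₁ k₂ : ℕ} (h : k₁ ≤ k₂) :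
    (S.carrier ∩ interval S.mult k₁).ncard ≤ (S.carrier ∩ interval S.mult k₂).ncard := by
  obtain ⟨d, rfl⟩ := Nat.exists_eq_add_of_le h
  have hI : interval S.mult (k₁ + d) = Set.Ico (k₁ * S.mult + d * S.mult)
      ((k₁ + 1) * S.mult + d * S.mult) := by
    simp only [interval]; congr 1 <;> ring
  rw [hI]
  exact Set.ncard_inter_Ico_le_of_add_mem (fun s hs => S.add_mem hs (S.mul_mult_mem d)) _ _

theorem succ_mul_mult_le_frob (S : NumericalSemigroup) {k : ℕ} (hk : (k : ℤ) ≤ S.Lindex - 1) :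
    ((k : ℤ) + 1) * S.mult ≤ S.frob :=
  calc ((k : ℤ) + 1) * S.mult ≤ S.Lindex * S.mult := by gcongr; omega
    _ ≤ S.frob := Int.ediv_mul_le _ (by exact_mod_cast S.mult_pos.ne')

theorem nk_eq_ncard_of_succ_mul_mult_le_frob (S : NumericalSemigroup) {k : ℕ}
    (hk : ((k : ℤ) + 1) * S.mult ≤ S.frob) :
    S.nk k = (S.carrier ∩ interval S.mult k).ncard := by
  refine congrArg Set.ncard (Set.sep_eq_self_iff_mem_true.mpr fun s ⟨_, _, hs⟩ => ?_)
  have : (s : ℤ) < ((k : ℤ) + 1) * S.mult := by exact_mod_cast hs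
  omega

/-- If `0 ≤ k₁ < k₂ ≤ L - 1` then `n_{k₁} ≤ n_{k₂}`. -/
theorem nk_mono (S : NumericalSemigroup)
    (k₁ k₂ : ℕ) (h12 : k₁ < k₂) (hk : (k₂ : ℤ) ≤ S.Lindex - 1) :
    S.nk k₁ ≤ S.nk k₂ := by
  have hk₂ := S.succ_mul_mult_le_frob hk
  have hk₁ := S.succ_mul_mult_le_frob (k := k₁) (by omega)
  rw [S.nk_eq_ncard_of_succ_mul_mult_le_frob hk₁, S.nk_eq_ncard_of_succ_mul_mult_le_frob hk₂]
  exact S.ncard_inter_interval_mono h12.le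

end NumericalSemigroup
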